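/- Let s ≥ 1 and m ≥ 1 be integers and put s′ = min(s, ord_p(m)). For every b ∈ fil_{m−1} W_s(K) and every c ∈ fil_m W_{s′}(K), both F^{s−1}d(b) and F^{s−1}d(V^{s−s′} c) lie in the O_K-submodule π^{−m}·Im(Ω¹_{O_K}) of Ω¹_K, where V^{s−s′} : W_{s′}(K) → W_s(K) is the iterated Verschiebung. -/

import Mathlib

/-!
Setting: `K` is a (complete) discrete valuation field of characteristic `p > 0` with
normalized additive valuation `v : K → ℤ ∪ {∞}` and uniformizer `π` (`v π = 1`).
`W_s(K) = TruncatedWittVector p s K` with Verschiebung `V` given in coordinates by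
`(V a)_0 = 0`, `(V a)_{j+1} = a_j`; `Ω¹` denotes absolute Kähler differentials and
`π^(-m)·Im(Ω¹_{O_K}) = {π^(-m) • η : η ∈ Im(Ω¹_{O_K})}`.
-/

set_option synthInstance.maxHeartbeats 1000000
set_option maxHeartbeats 1000000
noncomputable section

/-- `ord_s(a) = min_{0 ≤ j < s} p^(s-1-j) · v(a_j)` on Witt vectors of length `s`. -/
def wittOrd (p : ℕ) {K : Type*} [Field K] (v : AddValuation K (WithTop ℤ))
    {s : ℕ} (a : TruncatedWittVector p s K) : WithTop ℤ :=
  Finset.univ.inf fun j : Fin s => p ^ (s - 1 - (j : ℕ)) • v (a.coeff j)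

/-- `fil_n W_s(K) = {a ∈ W_s(K) : ord_s(a) ≥ -n}`. -/
def wittFil (p : ℕ) {K : Type*} [Field K] (v : AddValuation K (WithTop ℤ))
    (s : ℕ) (n : ℤ) : Set (TruncatedWittVector p s K) :=
  {a | ((-n : ℤ) : WithTop ℤ) ≤ wittOrd p v a}

/-- The Verschiebung `V : W_s(K) → W_{s+1}(K)`, `(V a)_0 = 0`, `(V a)_{j+1} = a_j`. -/
def wittV (p : ℕ) {K : Type*} [Field K] {s : ℕ}
    (a : TruncatedWittVector p s K) : TruncatedWittVector p (s + 1) K :=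
  TruncatedWittVector.mk p (Fin.cons 0 fun j => a.coeff j)

/-- The `k`-fold iterated Verschiebung `V^k : W_s(K) → W_{s+k}(K)`. -/
def wittViter (p : ℕ) {K : Type*} [Field K] (k : ℕ) {s : ℕ}
    (a : TruncatedWittVector p s K) : TruncatedWittVector p (s + k) K :=
  Nat.rec (motive := fun k => TruncatedWittVector p (s + k) K) a (fun _ b => wittV p b) k

/-- Transport of Witt vectors along an equality of lengths (identity on coordinates). -/
def wittCast (p : ℕ) {K : Type*} [Field K] {s t : ℕ} (h : s = t)
    (a : TruncatedWittVector p s K) : TruncatedWittVector p t K :=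
  TruncatedWittVector.mk p fun j => a.coeff (Fin.cast h.symm j)

/-- The iterated Verschiebung `V^(s-s') : W_{s'}(K) → W_s(K)` for `s' ≤ s`. -/
def wittVpow (p : ℕ) {K : Type*} [Field K] {s' s : ℕ} (h : s' ≤ s)
    (a : TruncatedWittVector p s' K) : TruncatedWittVector p s K :=
  wittCast p (Nat.add_sub_cancel' h) (wittViter p (s - s') a)

/-- The valuation ring `O_K = {x : K | v(x) ≥ 0}`. -/
def valRing {K : Type*} [Field K] (v : AddValuation K (WithTop ℤ)) : Subring K where
  carrier := {x | 0 ≤ v x}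
  one_mem' := by simp [v.map_one]
  mul_mem' := by
    intro a b ha hb
    simp only [Set.mem_setOf_eq] at *
    rw [v.map_mul]
    exact add_nonneg ha hb
  zero_mem' := by simp [v.map_zero]
  add_mem' := by
    intro a b ha hb
    exact le_trans (le_min ha hb) (v.map_add a b)
  neg_mem' := by
    intro a ha
    simpa [v.map_neg] using ha

/-- The image `Im(Ω¹_{O_K}) ⊆ Ω¹_K` of the canonical map `Ω¹_{O_K} → Ω¹_K` on absolute
Kähler differentials. -/
def imOmegaValRing {K : Type*} [Field K] (v : AddValuation K (WithTop ℤ)) :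
    Set (KaehlerDifferential ℤ K) :=
  Set.range (KaehlerDifferential.map ℤ ℤ (valRing v) K)

/-- The `O_K`-submodule `π^(-m)·Im(Ω¹_{O_K}) = {π^(-m) • η : η ∈ Im(Ω¹_{O_K})}` of
`Ω¹_K`. -/
def filOmega' {K : Type*} [Field K] (v : AddValuation K (WithTop ℤ))
    (π : K) (m : ℕ) : Set (KaehlerDifferential ℤ K) :=
  {ω | ∃ η ∈ imOmegaValRing v, ω = π⁻¹ ^ m • η}

/-- `F^(s-1)d (a) = ∑_j a_j ^ (p^(s-1-j) - 1) • d a_j ∈ Ω¹_K`. -/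
def wittFd (p : ℕ) {K : Type*} [Field K] {s : ℕ}
    (a : TruncatedWittVector p s K) : KaehlerDifferential ℤ K :=
  ∑ j : Fin s, (a.coeff j ^ (p ^ (s - 1 - (j : ℕ)) - 1)) • KaehlerDifferential.D ℤ K (a.coeff j)

section Aux
variable {K : Type*} [Field K] (v : AddValuation K (WithTop ℤ))

lemma st6_vnat : ∀ n : ℕ, 0 ≤ v (n : K) := by
  intro n; induction n with
  | zero => simp [v.map_zero]
  | succ n ih =>
    push_cast
    exact le_trans (le_min ih (by rw [v.map_one])) (v.map_add _ _)

lemma st6_ne_top {a : K} (ha : a ≠ 0) : v a ≠ ⊤ := by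
  intro h
  have h2 := v.map_mul a a⁻¹
  rw [mul_inv_cancel₀ ha, v.map_one, h, top_add] at h2
  simp at h2

lemma st6_coe_nsmul (n : ℕ) (z : ℤ) : n • ((z : WithTop ℤ)) = ((n * z : ℤ) : WithTop ℤ) := by
  rw [← WithTop.coe_nsmul]; norm_num

lemma st6_im_zero : (0 : KaehlerDifferential ℤ K) ∈ imOmegaValRing v :=
  ⟨0, map_zero _⟩

lemma st6_im_add {x y : KaehlerDifferential ℤ K} (hx : x ∈ imOmegaValRing v)
    (hy : y ∈ imOmegaValRing v) : x + y ∈ imOmegaValRing v := by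
  obtain ⟨a, rfl⟩ := hx; obtain ⟨b, rfl⟩ := hy
  exact ⟨a + b, map_add _ _ _⟩

lemma st6_im_sum {ι : Type*} (s : Finset ι) (f : ι → KaehlerDifferential ℤ K)
    (h : ∀ i ∈ s, f i ∈ imOmegaValRing v) : (∑ i ∈ s, f i) ∈ imOmegaValRing v :=
  Finset.sum_induction f (· ∈ imOmegaValRing v) (fun _ _ ha hb => st6_im_add v ha hb)
    (st6_im_zero v) h

lemma st6_memIm (c z : K) (hc : 0 ≤ v c) (hz : 0 ≤ v z) :
    c • (KaehlerDifferential.D ℤ K) z ∈ imOmegaValRing v :=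
  ⟨(⟨c, hc⟩ : valRing v) • KaehlerDifferential.D ℤ (valRing v) ⟨z, hz⟩, by
    rw [map_smul, KaehlerDifferential.map_D]; rfl⟩

lemma st6_key (p : ℕ) [Fact p.Prime] [CharP K p] (π : K) (hπ : v π = 1)
    (m N : ℕ) (hN : 1 ≤ N) (a : K)
    (hcond : a = 0 ∨ ∃ t : ℤ, v a = (t : WithTop ℤ) ∧ 0 ≤ (m : ℤ) + N * t ∧
      (1 ≤ (m : ℤ) + N * t ∨ (p : ℤ) ∣ t)) :
    (π ^ m * a ^ (N - 1)) • (KaehlerDifferential.D ℤ K) a ∈ imOmegaValRing v := by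
  have hπ0 : π ≠ 0 := fun h => by simp [h, v.map_zero] at hπ
  rcases hcond with rfl | ⟨t, hva, h0, h1⟩
  · rw [show (KaehlerDifferential.D ℤ K) (0 : K) = 0 from map_zero _, smul_zero]
    exact ⟨0, map_zero _⟩
  rcases le_or_gt 0 t with ht | ht
  · apply st6_memIm
    · rw [v.map_mul, v.map_pow, v.map_pow, hπ, hva]
      exact add_nonneg (nsmul_nonneg zero_le_one m)
        (nsmul_nonneg (by exact_mod_cast ht) _)
    · rw [hva]; exact_mod_cast ht
  · set k : ℕ := (-t).toNat with hkdef
    have hk : (k : ℤ) = -t := Int.toNat_of_nonneg (by omega)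
    have hk1 : 1 ≤ k := by omega
    have ha0 : a ≠ 0 := by
      intro h; rw [h, v.map_zero] at hva; exact (WithTop.coe_ne_top hva.symm)
    have hvπk : v (π ^ k) = ((k : ℤ) : WithTop ℤ) := by
      rw [v.map_pow, hπ, ← WithTop.coe_one, st6_coe_nsmul]; norm_num
    have hDa : (KaehlerDifferential.D ℤ K) a
        = (π ^ k)⁻¹ • (KaehlerDifferential.D ℤ K) (a * π ^ k)
          + (-(((π ^ k)⁻¹) ^ 2) * (((k : ℕ) : K) * π ^ (k - 1)) * (a * π ^ k)) •
              (KaehlerDifferential.D ℤ K) π := by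
      conv_lhs => rw [show a = (a * π ^ k) * (π ^ k)⁻¹ by field_simp]
      rw [Derivation.leibniz, Derivation.leibniz_inv, Derivation.leibniz_pow,
        ← Nat.cast_smul_eq_nsmul K]
      module
    rw [hDa, smul_add, smul_smul, smul_smul]
    apply st6_im_add
    · apply st6_memIm
      · have h2 : v (π ^ m * a ^ (N - 1) * (π ^ k)⁻¹)
            = (((m : ℤ) * 1 + (N - 1 : ℕ) * t + -(k : ℤ) : ℤ) : WithTop ℤ) := by
          rw [v.map_mul, v.map_mul, v.map_pow, v.map_pow, v.map_inv, hπ, hva, hvπk,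
            ← WithTop.coe_one, ← WithTop.LinearOrderedAddCommGroup.coe_neg,
            st6_coe_nsmul, st6_coe_nsmul]
          push_cast
          ring
        rw [h2]
        have heq : ((m : ℤ) * 1 + ((N - 1 : ℕ) : ℤ) * t + -(k : ℤ)) = (m : ℤ) + N * t := by
          push_cast [hN]; rw [hk]; ring
        rw [heq]
        exact_mod_cast h0
      · rw [v.map_mul, hva, hvπk, ← WithTop.coe_add]
        exact_mod_cast by omega
    · rcases h1 with h1 | hpt
      · rw [show π ^ m * a ^ (N - 1) *
              (-(((π ^ k)⁻¹) ^ 2) * (((k : ℕ) : K) * π ^ (k - 1)) * (a * π ^ k))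
            = ((k : ℕ) : K) *
              (π ^ m * a ^ (N - 1) * (-(((π ^ k)⁻¹) ^ 2)) * π ^ (k - 1) * (a * π ^ k))
          from by ring]
        apply st6_memIm
        · rw [v.map_mul]
          apply add_nonneg (st6_vnat v k)
          have h3 : v (π ^ m * a ^ (N - 1) * (-(((π ^ k)⁻¹) ^ 2)) * π ^ (k - 1) * (a * π ^ k))
              = (((m : ℤ) * 1 + (N - 1 : ℕ) * t + 2 * -(k : ℤ) + ((k - 1 : ℕ) : ℤ) * 1
                  + (t + (k : ℤ)) : ℤ) : WithTop ℤ) := by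
            rw [v.map_mul, v.map_mul, v.map_mul, v.map_mul, v.map_mul, v.map_neg, v.map_pow, v.map_pow,
              v.map_pow, v.map_pow, v.map_inv, hπ, hva, hvπk, ← WithTop.coe_one,
              ← WithTop.LinearOrderedAddCommGroup.coe_neg,
              st6_coe_nsmul, st6_coe_nsmul, st6_coe_nsmul, st6_coe_nsmul]
            push_cast
            ring
          rw [h3]
          have heq : ((m : ℤ) * 1 + ((N - 1 : ℕ) : ℤ) * t + 2 * -(k : ℤ) + ((k - 1 : ℕ) : ℤ) * 1
              + (t + (k : ℤ))) = (m : ℤ) + N * t - 1 := by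
            push_cast [hN, hk1]; ring
          rw [heq]
          exact_mod_cast by omega
        · rw [hπ]; exact zero_le_one
      · have hpk : ((k : ℕ) : K) = 0 := by
          have : (p : ℕ) ∣ k := by
            have hd : (p : ℤ) ∣ (k : ℤ) := by rw [hk]; exact dvd_neg.mpr hpt
            exact_mod_cast hd
          exact (CharP.cast_eq_zero_iff K p k).mpr this
        rw [show π ^ m * a ^ (N - 1) *
              (-(((π ^ k)⁻¹) ^ 2) * (((k : ℕ) : K) * π ^ (k - 1)) * (a * π ^ k)) = 0
          from by rw [hpk]; ring, zero_smul]
        exact st6_im_zero v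

end Aux

section Coeff
variable {p : ℕ} {K : Type*} [Field K]

lemma st6_coeff_wittViter (k : ℕ) {s : ℕ} (a : TruncatedWittVector p s K) (j : Fin (s + k)) :
    (wittViter p k a).coeff j
      = if h : (j : ℕ) < k then 0 else a.coeff ⟨(j : ℕ) - k, by omega⟩ := by
  induction k with
  | zero =>
    simp only [Nat.not_lt_zero, dif_neg, not_false_iff]
    congr 1
  | succ k ih =>
    have hV : wittViter p (k + 1) a = wittV p (wittViter p k a) := rfl
    rw [hV, wittV, TruncatedWittVector.coeff_mk]
    refine Fin.cases ?_ ?_ j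
    · simp
    · intro i
      rw [Fin.cons_succ, ih]
      by_cases h : (i : ℕ) < k
      · rw [dif_pos h, dif_pos (by simp [Fin.val_succ]; omega)]
      · rw [dif_neg h, dif_neg (by simp [Fin.val_succ]; omega)]
        congr 1
        ext
        simp [Fin.val_succ]

lemma st6_coeff_wittVpow {s' s : ℕ} (h : s' ≤ s) (a : TruncatedWittVector p s' K) (j : Fin s) :
    (wittVpow p h a).coeff j
      = if hlt : (j : ℕ) < s - s' then 0 else a.coeff ⟨(j : ℕ) - (s - s'), by omega⟩ := by
  rw [wittVpow, wittCast, TruncatedWittVector.coeff_mk, st6_coeff_wittViter]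
  by_cases hlt : (j : ℕ) < s - s'
  · rw [dif_pos (by simpa using hlt), dif_pos hlt]
  · rw [dif_neg (by simpa using hlt), dif_neg hlt]
    congr 1

end Coeff

/-- For `s ≥ 1`, `m ≥ 1` and `s' = min(s, ord_p(m))`: for every
`b ∈ fil_{m-1} W_s(K)` and every `c ∈ fil_m W_{s'}(K)`, both `F^(s-1)d(b)` and
`F^(s-1)d(V^(s-s') c)` lie in the `O_K`-submodule `π^(-m)·Im(Ω¹_{O_K})` of `Ω¹_K`. -/
theorem statement6 (p : ℕ) [Fact p.Prime] (K : Type*) [Field K] [CharP K p]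
    (v : AddValuation K (WithTop ℤ)) (hv : Function.Surjective v)
    (π : K) (hπ : v π = 1) (s m : ℕ) (hs : 1 ≤ s) (hm : 1 ≤ m) :
    (∀ b ∈ wittFil p v s ((m : ℤ) - 1), wittFd p b ∈ filOmega' v π m) ∧
    (∀ c ∈ wittFil p v (min s (padicValNat p m)) (m : ℤ),
        wittFd p (wittVpow p (min_le_left s (padicValNat p m)) c) ∈ filOmega' v π m) := by

  have hppos : 0 < p := (Fact.out : p.Prime).pos
  have hπ0 : π ≠ 0 := fun h => by simp [h, v.map_zero] at hπ
  have hred : ∀ ω : KaehlerDifferential ℤ K, (π ^ m) • ω ∈ imOmegaValRing v →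
      ω ∈ filOmega' v π m := by
    intro ω hω
    refine ⟨(π ^ m) • ω, hω, ?_⟩
    rw [smul_smul, ← mul_pow, inv_mul_cancel₀ hπ0, one_pow, one_smul]
  have hterm : ∀ a : TruncatedWittVector p s K,
      (∀ j : Fin s, a.coeff j = 0 ∨ ∃ t : ℤ, v (a.coeff j) = (t : WithTop ℤ) ∧
        0 ≤ (m : ℤ) + ((p ^ (s - 1 - (j : ℕ)) : ℕ) : ℤ) * t ∧
        (1 ≤ (m : ℤ) + ((p ^ (s - 1 - (j : ℕ)) : ℕ) : ℤ) * t ∨ (p : ℤ) ∣ t)) →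
      wittFd p a ∈ filOmega' v π m := by
    intro a hcoef
    apply hred
    rw [wittFd, Finset.smul_sum]
    apply st6_im_sum
    intro j _
    rw [smul_smul]
    exact st6_key v p π hπ m (p ^ (s - 1 - (j : ℕ)))
      (Nat.one_le_pow _ _ hppos) (a.coeff j) (hcoef j)
  constructor
  · intro b hb
    apply hterm
    intro j
    by_cases h0 : b.coeff j = 0
    · exact Or.inl h0
    · right
      obtain ⟨t, ht⟩ := WithTop.ne_top_iff_exists.mp (st6_ne_top v h0)
      have hb' : (((-((m : ℤ) - 1)) : ℤ) : WithTop ℤ) ≤ wittOrd p v b := hb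
      have hx : wittOrd p v b ≤ (p ^ (s - 1 - (j : ℕ)) : ℕ) • v (b.coeff j) :=
        Finset.inf_le (Finset.mem_univ j)
      have hj := le_trans hb' hx
      rw [← ht, st6_coe_nsmul] at hj
      have hj' : -((m : ℤ) - 1) ≤ ((p ^ (s - 1 - (j : ℕ)) : ℕ) : ℤ) * t :=
        WithTop.coe_le_coe.mp hj
      exact ⟨t, ht.symm, by linarith, Or.inl (by linarith)⟩
  · intro c hc
    have hss : min s (padicValNat p m) ≤ s := min_le_left _ _
    apply hterm
    intro j
    have hjlt := j.isLt
    by_cases hlt : (j : ℕ) < s - min s (padicValNat p m)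
    · left
      rw [st6_coeff_wittVpow, dif_pos hlt]
    · have his : (j : ℕ) - (s - min s (padicValNat p m)) < min s (padicValNat p m) := by omega
      have hcoeff : (wittVpow p (min_le_left s (padicValNat p m)) c).coeff j
          = c.coeff ⟨(j : ℕ) - (s - min s (padicValNat p m)), his⟩ := by
        rw [st6_coeff_wittVpow, dif_neg hlt]
      rw [hcoeff]
      set i : ℕ := (j : ℕ) - (s - min s (padicValNat p m)) with hi
      set x : K := c.coeff ⟨i, his⟩ with hxdef
      by_cases h0 : x = 0
      · exact Or.inl h0
      right
      obtain ⟨t, ht⟩ := WithTop.ne_top_iff_exists.mp (st6_ne_top v h0)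
      have hb' : (((-(m : ℤ)) : ℤ) : WithTop ℤ) ≤ wittOrd p v c := hc
      have hinf : wittOrd p v c ≤ (p ^ (min s (padicValNat p m) - 1 - i) : ℕ) • v x :=
        Finset.inf_le (Finset.mem_univ (⟨i, his⟩ : Fin (min s (padicValNat p m))))
      have hj2 := le_trans hb' hinf
      rw [← ht, st6_coe_nsmul] at hj2
      have hj' : -(m : ℤ) ≤ ((p ^ (min s (padicValNat p m) - 1 - i) : ℕ) : ℤ) * t :=
        WithTop.coe_le_coe.mp hj2
      have hexp : s - 1 - (j : ℕ) = min s (padicValNat p m) - 1 - i := by omega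
      rw [hexp]
      refine ⟨t, ht.symm, by linarith, ?_⟩
      rcases lt_or_eq_of_le hj' with hlt2 | heq
      · exact Or.inl (by linarith)
      · right
        have hND : ((p : ℤ) ^ (min s (padicValNat p m) - 1 - i)) * t = -(m : ℤ) := by
          push_cast at heq; linarith
        have hdvd1 : (p : ℤ) ^ min s (padicValNat p m) ∣ (m : ℤ) := by
          have h1 : (p : ℕ) ^ padicValNat p m ∣ m := pow_padicValNat_dvd
          have h2 : (p : ℕ) ^ min s (padicValNat p m) ∣ (p : ℕ) ^ padicValNat p m :=
            pow_dvd_pow p (min_le_right _ _)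
          exact_mod_cast h2.trans h1
        have hsplit : min s (padicValNat p m)
            = (min s (padicValNat p m) - 1 - i) + (i + 1) := by omega
        rw [hsplit, pow_add] at hdvd1
        have hmt : (m : ℤ) = (p : ℤ) ^ (min s (padicValNat p m) - 1 - i) * (-t) := by linarith
        rw [hmt] at hdvd1
        have hp0 : ((p : ℤ) ^ (min s (padicValNat p m) - 1 - i)) ≠ 0 :=
          pow_ne_zero _ (by exact_mod_cast hppos.ne')
        have hfin := (mul_dvd_mul_iff_left hp0).mp hdvd1
        exact dvd_neg.mp ((dvd_pow_self (p : ℤ) (Nat.succ_ne_zero i)).trans hfin)
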